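/- arXiv:2305.04222 — 3 statements merged into one kernel-verified Lean document; each statement's English description precedes it below -/
import Mathlib

section
/- The additive closure of the relational composition of two place relations equals the composition of their additive closures: (R₁ ∘ R₂)⊕ = (R₁⊕) ∘ (R₂⊕). -/
/-!
`R⊕` is Mathlib's `Multiset.Rel R`. A composed pair splits through its middle place, so
adding such pairs builds the middle marking alongside. Conversely, for `m₁ R₁⊕ m R₂⊕ m₂`,
a place of `m₁` is `R₁`-matched with some place of `m`, and inverting `R₂⊕` at that place
(which may sit anywhere in `m`, since markings are unordered) yields its `R₂`-partner in `m₂`.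
-/


/-- The additive closure `R⊕` of a place relation `R`: the least marking
relation containing `(0,0)` and closed under pairwise addition of
`R`-related places. -/
inductive AddClosure {S : Type} (R : S → S → Prop) : Multiset S → Multiset S → Prop
  | nil : AddClosure R 0 0
  | cons {s₁ s₂ : S} {m₁ m₂ : Multiset S} :
      R s₁ s₂ → AddClosure R m₁ m₂ → AddClosure R (s₁ ::ₘ m₁) (s₂ ::ₘ m₂)

theorem addClosure_eq_rel {S : Type} (R : S → S → Prop) : AddClosure R = Multiset.Rel R := by
  ext a b
  constructor
  · intro h
    induction h with
    | nil => exact .zero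
    | cons hr _ ih => exact .cons hr ih
  · intro h
    induction h with
    | zero => exact .nil
    | cons hr _ ih => exact .cons hr ih

namespace Multiset

variable {α β γ : Type*} {r : α → β → Prop} {p : β → γ → Prop}

theorem Rel.comp {s : Multiset α} {u : Multiset γ} (h : Rel (Relation.Comp r p) s u) :
    Relation.Comp (Rel r) (Rel p) s u := by
  induction h with
  | zero => exact ⟨0, .zero, .zero⟩
  | cons hac _ ih =>
    obtain ⟨b, hab, hbc⟩ := hac
    obtain ⟨t, hst, htu⟩ := ih
    exact ⟨b ::ₘ t, .cons hab hst, .cons hbc htu⟩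

theorem Rel.of_comp {s : Multiset α} {t : Multiset β} {u : Multiset γ} (hst : Rel r s t)
    (htu : Rel p t u) : Rel (Relation.Comp r p) s u := by
  induction hst generalizing u with
  | zero => rw [rel_zero_left.mp htu]; exact .zero
  | cons hab _ ih =>
    obtain ⟨c, u', hbc, htu', rfl⟩ := rel_cons_left.mp htu
    exact .cons ⟨_, hab, hbc⟩ (ih htu')

theorem rel_comp : Rel (Relation.Comp r p) = Relation.Comp (Rel r) (Rel p) := by
  ext s u
  exact ⟨Rel.comp, fun ⟨_, hst, htu⟩ => hst.of_comp htu⟩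

end Multiset

/-- `(R₁ ∘ R₂)⊕ = (R₁⊕) ∘ (R₂⊕)`. -/
theorem addClosure_comp {S : Type} (R₁ R₂ : S → S → Prop) :
    AddClosure (Relation.Comp R₁ R₂) =
      Relation.Comp (AddClosure R₁) (AddClosure R₂) := by
  simp only [addClosure_eq_rel]
  exact Multiset.rel_comp
end

section
/- If (m₁, m₂) ∈ R⊕ and m₁' ⊆ m₁ (as multisets), then there exists m₂' ⊆ m₂ such that (m₁', m₂') ∈ R⊕ and (m₁ − m₁', m₂ − m₂') ∈ R⊕, where − denotes multiset difference. -/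
/-! `R⊕` is the multiset lifting `Multiset.Rel R` of `R`, so a decomposition
`m₁ = m₁' + (m₁ - m₁')` of the left marking lifts to a decomposition `m₂ = m₂' + m₂''` of the
right one (`Multiset.rel_add_left`), and then `m₂ - m₂' = m₂''`. -/

theorem addClosure_iff_rel {S : Type} {R : S → S → Prop} {m₁ m₂ : Multiset S} :
    AddClosure R m₁ m₂ ↔ Multiset.Rel R m₁ m₂ := by
  constructor
  · intro h
    induction h with
    | nil => exact .zero
    | cons hR _ ih => exact .cons hR ih
  · intro h
    induction h with
    | zero => exact .nil
    | cons hR _ ih => exact .cons hR ih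

/-- If `(m₁, m₂) ∈ R⊕` and `m₁' ⊆ m₁`, then there is `m₂' ⊆ m₂` with
`(m₁', m₂') ∈ R⊕` and `(m₁ − m₁', m₂ − m₂') ∈ R⊕`. -/
theorem addClosure_split {S : Type} (R : S → S → Prop)
    [DecidableEq S] {m₁ m₂ m₁' : Multiset S} (h : AddClosure R m₁ m₂) (hle : m₁' ≤ m₁) :
    ∃ m₂', m₂' ≤ m₂ ∧ AddClosure R m₁' m₂' ∧
      AddClosure R (m₁ - m₁') (m₂ - m₂') := by
  rw [addClosure_iff_rel, ← add_tsub_cancel_of_le hle] at h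
  obtain ⟨m₂', m₂'', h', h'', rfl⟩ := Multiset.rel_add_left.mp h
  refine ⟨m₂', Multiset.le_add_right m₂' m₂'', addClosure_iff_rel.mpr h', ?_⟩
  rw [add_tsub_cancel_left]
  exact addClosure_iff_rel.mpr h''
end

section
/- Branching interleaving bisimilarity satisfies the strong stuttering property: if m₁[t₁⟩m₂[t₂⟩m₃ … m_n[t_n⟩m_{n+1} is a firing sequence with l(tᵢ) = τ for all i and m₁ ≈_bri m_{n+1}, then mᵢ ≈_bri m_j for all i, j ∈ {1,…,n+1}. -/
/-- A transition of a P/T net: pre-set, label, post-set, with nonempty pre-set. -/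
structure NetTrans (S A : Type) where
  pre : Multiset S
  lab : A
  post : Multiset S
  pre_ne : pre ≠ 0

/-- A P/T net over places `S` and labels `A`, given by its set of transitions. -/
structure PNet (S A : Type) where
  T : Set (NetTrans S A)

/-- Firing: `m [t⟩ m'` iff `t` is a transition of the net, `pre(t) ⊆ m` and
`m' = (m − pre(t)) + post(t)`. -/
def Fires {S A : Type} [DecidableEq S] (N : PNet S A) (m : Multiset S) (t : NetTrans S A)
    (m' : Multiset S) : Prop :=
  t ∈ N.T ∧ t.pre ≤ m ∧ m' = m - t.pre + t.post

/-- Interleaving bisimulation on markings. -/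
def IntBisim {S A : Type} [DecidableEq S] (N : PNet S A)
    (R : Multiset S → Multiset S → Prop) : Prop :=
  ∀ m₁ m₂, R m₁ m₂ →
    (∀ t₁ m₁', Fires N m₁ t₁ m₁' →
      ∃ t₂ m₂', Fires N m₂ t₂ m₂' ∧ t₁.lab = t₂.lab ∧ R m₁' m₂') ∧
    (∀ t₂ m₂', Fires N m₂ t₂ m₂' →
      ∃ t₁ m₁', Fires N m₁ t₁ m₁' ∧ t₁.lab = t₂.lab ∧ R m₁' m₂')

/-- Interleaving bisimilarity `∼_int`. -/
def IntBisimilar {S A : Type} [DecidableEq S] (N : PNet S A) (m₁ m₂ : Multiset S) : Prop :=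
  ∃ R, IntBisim N R ∧ R m₁ m₂

/-- A single silent (`τ`-labeled) firing step. -/
def SilentStep {S A : Type} [DecidableEq S] (N : PNet S A) (τ : A) (m m' : Multiset S) : Prop :=
  ∃ t, Fires N m t m' ∧ t.lab = τ

/-- A silent firing sequence (possibly empty): `m [σ⟩ m'` with `o(σ) = ε`. -/
def SilentReach {S A : Type} [DecidableEq S] (N : PNet S A) (τ : A) :
    Multiset S → Multiset S → Prop :=
  Relation.ReflTransGen (SilentStep N τ)

/-- Branching interleaving bisimulation. -/
def BrIntBisim {S A : Type} [DecidableEq S] (N : PNet S A) (τ : A)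
    (R : Multiset S → Multiset S → Prop) : Prop :=
  ∀ m₁ m₂, R m₁ m₂ →
    (∀ t₁ m₁', Fires N m₁ t₁ m₁' →
      (t₁.lab = τ ∧ ∃ m₂', SilentReach N τ m₂ m₂' ∧ R m₁ m₂' ∧ R m₁' m₂') ∨
      (∃ m t₂ m₂', SilentReach N τ m₂ m ∧ Fires N m t₂ m₂' ∧
        t₁.lab = t₂.lab ∧ R m₁ m ∧ R m₁' m₂')) ∧
    (∀ t₂ m₂', Fires N m₂ t₂ m₂' →
      (t₂.lab = τ ∧ ∃ m₁', SilentReach N τ m₁ m₁' ∧ R m₁' m₂ ∧ R m₁' m₂') ∨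
      (∃ m t₁ m₁', SilentReach N τ m₁ m ∧ Fires N m t₁ m₁' ∧
        t₁.lab = t₂.lab ∧ R m m₂ ∧ R m₁' m₂'))

/-- Branching interleaving bisimilarity `≈_bri`. -/
def BrIntBisimilar {S A : Type} [DecidableEq S] (N : PNet S A) (τ : A)
    (m₁ m₂ : Multiset S) : Prop :=
  ∃ R, BrIntBisim N τ R ∧ R m₁ m₂

/-!
Every marking `mᵢ` of the silent run lies between `m₀` and `m_last`. Matching the silent run
`m₀ →* mᵢ` from `m_last` gives `r` with `m_last →* r` and `mᵢ ≈_bri r`, so every `mⱼ` silently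
reaches a marking bisimilar to `mᵢ`. A pair of markings each of which silently reaches a marking
bisimilar to the other is bisimilar, since the transfer conditions of the pair can be answered
through those two bisimilar pairs.
-/

section BranchingBisimilarity

variable {S A : Type} [DecidableEq S] (N : PNet S A) (τ : A)

def BrIntTransfer (R : Multiset S → Multiset S → Prop) (m₁ m₂ : Multiset S) : Prop :=
  ∀ t₁ m₁', Fires N m₁ t₁ m₁' →
    (t₁.lab = τ ∧ ∃ m₂', SilentReach N τ m₂ m₂' ∧ R m₁ m₂' ∧ R m₁' m₂') ∨
    (∃ m t₂ m₂', SilentReach N τ m₂ m ∧ Fires N m t₂ m₂' ∧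
      t₁.lab = t₂.lab ∧ R m₁ m ∧ R m₁' m₂')

variable {N τ}

lemma brIntBisim_iff_transfer {R : Multiset S → Multiset S → Prop} :
    BrIntBisim N τ R ↔
      ∀ m₁ m₂, R m₁ m₂ → BrIntTransfer N τ R m₁ m₂ ∧ BrIntTransfer N τ (flip R) m₂ m₁ := by
  simp only [BrIntBisim, BrIntTransfer, flip, @eq_comm _ (NetTrans.lab _) (NetTrans.lab _)]

lemma BrIntTransfer.mono {R R' : Multiset S → Multiset S → Prop} {m₁ m₂ : Multiset S}
    (h : BrIntTransfer N τ R m₁ m₂) (hRR' : ∀ a b, R a b → R' a b) :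
    BrIntTransfer N τ R' m₁ m₂ := by
  intro t₁ m₁' hf
  rcases h t₁ m₁' hf with ⟨hτ, m₂', hr, h₀, h₁⟩ | ⟨m, t₂, m₂', hr, hf₂, hl, h₀, h₁⟩
  · exact Or.inl ⟨hτ, m₂', hr, hRR' _ _ h₀, hRR' _ _ h₁⟩
  · exact Or.inr ⟨m, t₂, m₂', hr, hf₂, hl, hRR' _ _ h₀, hRR' _ _ h₁⟩

lemma BrIntTransfer.of_silentReach {R : Multiset S → Multiset S → Prop} {m₁ m₂ m₂' : Multiset S}
    (h : BrIntTransfer N τ R m₁ m₂') (hr : SilentReach N τ m₂ m₂') :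
    BrIntTransfer N τ R m₁ m₂ := by
  intro t₁ m₁' hf
  rcases h t₁ m₁' hf with ⟨hτ, m₂'', hr', h₀, h₁⟩ | ⟨m, t₂, m₂'', hr', hf₂, hl, h₀, h₁⟩
  · exact Or.inl ⟨hτ, m₂'', hr.trans hr', h₀, h₁⟩
  · exact Or.inr ⟨m, t₂, m₂'', hr.trans hr', hf₂, hl, h₀, h₁⟩

lemma brIntBisim_brIntBisimilar : BrIntBisim N τ (BrIntBisimilar N τ) := by
  refine brIntBisim_iff_transfer.2 fun m₁ m₂ ⟨R, hR, hm⟩ => ?_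
  obtain ⟨h₁, h₂⟩ := brIntBisim_iff_transfer.1 hR m₁ m₂ hm
  exact ⟨h₁.mono fun a b h => ⟨R, hR, h⟩, h₂.mono fun a b h => ⟨R, hR, h⟩⟩

lemma BrIntBisimilar.symm {m₁ m₂ : Multiset S} (h : BrIntBisimilar N τ m₁ m₂) :
    BrIntBisimilar N τ m₂ m₁ := by
  obtain ⟨R, hR, hm⟩ := h
  refine ⟨flip R, brIntBisim_iff_transfer.2 fun a b hab => ?_, hm⟩
  exact (brIntBisim_iff_transfer.1 hR b a hab).symm

lemma BrIntBisimilar.exists_silentReach {m₁ m₂ m₁' : Multiset S}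
    (h : BrIntBisimilar N τ m₁ m₂) (hr : SilentReach N τ m₁ m₁') :
    ∃ m₂', SilentReach N τ m₂ m₂' ∧ BrIntBisimilar N τ m₁' m₂' := by
  induction hr with
  | refl => exact ⟨m₂, .refl, h⟩
  | tail _ hstep ih =>
    obtain ⟨m₂', hr, h'⟩ := ih
    obtain ⟨t, hf, hτ⟩ := hstep
    rcases (brIntBisim_iff_transfer.1 brIntBisim_brIntBisimilar _ _ h').1 t _ hf with
      ⟨-, m₂'', hr', -, h''⟩ | ⟨_, t₂, m₂'', hr', hf₂, hl, -, h''⟩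
    · exact ⟨m₂'', hr.trans hr', h''⟩
    · exact ⟨m₂'', hr.trans (.tail hr' ⟨t₂, hf₂, hl ▸ hτ⟩), h''⟩

lemma brIntBisimilar_of_silentReach {m₁ m₂ r s : Multiset S}
    (hr : SilentReach N τ m₂ r) (h₁ : BrIntBisimilar N τ m₁ r)
    (hs : SilentReach N τ m₁ s) (h₂ : BrIntBisimilar N τ s m₂) :
    BrIntBisimilar N τ m₁ m₂ := by
  let R a b := BrIntBisimilar N τ a b ∨ (a = m₁ ∧ b = m₂)
  have hR : ∀ a b, BrIntBisimilar N τ a b → R a b := fun _ _ => Or.inl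
  have hRflip : ∀ a b, flip (BrIntBisimilar N τ) a b → flip R a b := fun _ _ => Or.inl
  have htransfer := brIntBisim_iff_transfer.1 (brIntBisim_brIntBisimilar (N := N) (τ := τ))
  refine ⟨R, brIntBisim_iff_transfer.2 ?_, Or.inr ⟨rfl, rfl⟩⟩
  rintro a b (hab | ⟨rfl, rfl⟩)
  · exact ⟨(htransfer a b hab).1.mono hR, (htransfer a b hab).2.mono hRflip⟩
  · exact ⟨((htransfer _ _ h₁).1.of_silentReach hr).mono hR,
      ((htransfer _ _ h₂).2.of_silentReach hs).mono hRflip⟩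

end BranchingBisimilarity

lemma Relation.ReflTransGen.of_chain_zero {α : Type*} {r : α → α → Prop} {n : ℕ}
    {m : Fin (n + 1) → α} (h : ∀ i : Fin n, r (m i.castSucc) (m i.succ)) (i : Fin (n + 1)) :
    ReflTransGen r (m 0) (m i) := by
  induction i using Fin.induction with
  | zero => exact .refl
  | succ i ih => exact ih.tail (h i)

lemma Relation.ReflTransGen.of_chain_last {α : Type*} {r : α → α → Prop} {n : ℕ}
    {m : Fin (n + 1) → α} (h : ∀ i : Fin n, r (m i.castSucc) (m i.succ)) (i : Fin (n + 1)) :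
    ReflTransGen r (m i) (m (Fin.last n)) := by
  induction i using Fin.reverseInduction with
  | last => exact .refl
  | cast i ih => exact ih.head (h i)

/-- Strong stuttering property: in a silent firing sequence
`m₁ [t₁⟩ m₂ [t₂⟩ … [t_n⟩ m_{n+1}` with all transitions labeled `τ`, if the two
end markings are branching interleaving bisimilar, then all the markings in the
sequence are pairwise branching interleaving bisimilar. -/
theorem brIntBisimilar_strong_stuttering {S A : Type} [DecidableEq S] (N : PNet S A) (τ : A)
    (n : ℕ) (m : Fin (n + 1) → Multiset S)
    (hstep : ∀ i : Fin n, SilentStep N τ (m i.castSucc) (m i.succ))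
    (hend : BrIntBisimilar N τ (m 0) (m (Fin.last n))) :
    ∀ i j : Fin (n + 1), BrIntBisimilar N τ (m i) (m j) := by
  have hfirst := Relation.ReflTransGen.of_chain_zero hstep
  have hlast := Relation.ReflTransGen.of_chain_last hstep
  intro i j
  obtain ⟨r, hr, hir⟩ := hend.exists_silentReach (hfirst i)
  obtain ⟨s, hs, hjs⟩ := hend.exists_silentReach (hfirst j)
  exact brIntBisimilar_of_silentReach ((hlast j).trans hr) hir ((hlast i).trans hs) hjs.symm
end
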